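/- arXiv:1401.5500 — 2 statements merged into one kernel-verified Lean document; each statement's English description precedes it below -/
import Mathlib

section
/- A linear map ŝ_I from heis(1,n,ℝχ_I) to heis(F,1,n) determined by ŝ_I(L_0) = a_I·i1, ŝ_I(L_{n+1}(χ_I)) = b_I·ip, ŝ_I(L_k(χ_I)) = c_{k,I}·iq^k for k = 1,...,n, with nonzero real constants a_I, b_I, c_{k,I}, is a Lie algebra isomorphism if and only if c_{k,I} = b_I^{-k}·|I|·a_I for all k ∈ {1,...,n}. -/
/-! Both brackets only pair the `p`-coordinate with the others, and `ŝ_I` is diagonal, so bracket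
preservation reduces, coordinate by coordinate, to the recursion `c₀ = b c₁`, `c_m = b c_{m+1}`
with the convention `c₀ := |I| a`. For `b ≠ 0` the solutions of this recursion are exactly the
geometric sequences `c_k = b⁻ᵏ c₀`. -/

/-- The bracket of `heis(1,n,ℝχ_I)` (current algebra of `heis(1,n)` with test functions
multiples of `χ_I`, `μ = |I|`), in coordinates w.r.t. the basis
`L_0, L_1(χ_I), …, L_{n+1}(χ_I)`: the nonzero brackets of basis vectors are
`[L_{n+1}(χ_I), L_1(χ_I)] = |I| • L_0` and `[L_{n+1}(χ_I), L_k(χ_I)] = k • L_{k-1}(χ_I)`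
for `k ∈ {2,…,n}`. -/
def chiBracket (n : ℕ) (μ : ℝ) (x y : ℕ → ℝ) : ℕ → ℝ :=
  fun m =>
    if m = 0 then μ * (x (n + 1) * y 1 - y (n + 1) * x 1)
    else if m + 1 ≤ n then (m + 1 : ℝ) * (x (n + 1) * y (m + 1) - y (n + 1) * x (m + 1))
    else 0

/-- The bracket of `heis(F,1,n)` (Schroedinger realization, basis
`i1, iq, iq², …, iqⁿ, ip` at coordinates `0, 1, …, n, n+1`): nonzero brackets of basis
vectors are `[ip, iq^k] = k • (i q^{k-1})`, `k ∈ {1,…,n}`. -/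
def fockBracket (n : ℕ) (x y : ℕ → ℝ) : ℕ → ℝ :=
  fun m =>
    if m + 1 ≤ n then (m + 1 : ℝ) * (x (n + 1) * y (m + 1) - y (n + 1) * x (m + 1)) else 0

/-- The linear map `ŝ_I` determined by `ŝ_I(L_0) = a·i1`, `ŝ_I(L_{n+1}(χ_I)) = b·ip`,
`ŝ_I(L_k(χ_I)) = c_k·iq^k` for `k = 1,…,n`, in coordinates. -/
def hatS (n : ℕ) (a b : ℝ) (c : ℕ → ℝ) (x : ℕ → ℝ) : ℕ → ℝ :=
  fun m =>
    if m = 0 then a * x 0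
    else if m = n + 1 then b * x (n + 1)
    else if m ≤ n then c m * x m
    else 0

open Function

theorem forall_eq_mul_succ_iff {K : Type*} [Field K] {b : K} (hb : b ≠ 0) (d : ℕ → K) (n : ℕ) :
    (∀ m < n, d m = b * d (m + 1)) ↔ ∀ k ≤ n, d k = b ^ (-(k : ℤ)) * d 0 := by
  have step : ∀ k : ℕ, b ^ (-(k : ℤ)) = b * b ^ (-((k + 1 : ℕ) : ℤ)) := by
    intro k
    rw [Nat.cast_succ, neg_add, zpow_add₀ hb, zpow_neg_one, mul_left_comm, mul_inv_cancel₀ hb,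
      mul_one]
  constructor
  · intro h k hk
    induction k with
    | zero => simp
    | succ k ih =>
      have hrec := h k hk
      rw [ih (by omega), step, mul_assoc] at hrec
      exact (mul_left_cancel₀ hb hrec).symm
  · intro h m hm
    rw [h m hm.le, h (m + 1) hm, step, mul_assoc]

theorem hatS_chiBracket_apply (n : ℕ) (μ a b : ℝ) (c x y : ℕ → ℝ) (m : ℕ) :
    hatS n a b c (chiBracket n μ x y) m =
      if m + 1 ≤ n then
        (m + 1) * update c 0 (μ * a) m * (x (n + 1) * y (m + 1) - y (n + 1) * x (m + 1))
      else 0 := by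
  rcases Nat.eq_zero_or_pos m with rfl | hm
  · rcases Nat.eq_zero_or_pos n with rfl | hn
    · simp [hatS, chiBracket, mul_comm]
    · simp only [hatS, chiBracket, ↓reduceIte, zero_add, show 1 ≤ n from hn, update_self,
        Nat.cast_zero]
      ring
  · by_cases hmn : m + 1 ≤ n
    · simp only [hatS, chiBracket, ↓reduceIte, hm.ne', hmn, show m ≠ n + 1 by omega,
        show m ≤ n by omega, update_of_ne hm.ne']
      ring
    · simp [hatS, chiBracket, hm.ne', hmn]

theorem fockBracket_hatS_apply (n : ℕ) (a b : ℝ) (c x y : ℕ → ℝ) (m : ℕ) :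
    fockBracket n (hatS n a b c x) (hatS n a b c y) m =
      if m + 1 ≤ n then
        (m + 1) * (b * c (m + 1)) * (x (n + 1) * y (m + 1) - y (n + 1) * x (m + 1))
      else 0 := by
  by_cases hmn : m + 1 ≤ n
  · simp only [fockBracket, hatS, ↓reduceIte, hmn, Nat.succ_ne_zero, Nat.add_right_cancel_iff,
      show m ≠ n by omega]
    ring
  · simp [fockBracket, hmn]

theorem hatS_map_bracket_iff (n : ℕ) (μ a b : ℝ) (c : ℕ → ℝ) :
    (∀ x y : ℕ → ℝ,
        hatS n a b c (chiBracket n μ x y) = fockBracket n (hatS n a b c x) (hatS n a b c y))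
      ↔ ∀ m < n, update c 0 (μ * a) m = b * update c 0 (μ * a) (m + 1) := by
  simp only [update_of_ne (Nat.succ_ne_zero _)]
  constructor
  · intro h m hm
    -- test on the pair `(ip, iq^{m+1})`, whose pairing coordinate is `1`
    have H := congrFun (h (Pi.single (n + 1) 1) (Pi.single (m + 1) 1)) m
    rw [hatS_chiBracket_apply, fockBracket_hatS_apply, if_pos (Nat.succ_le_of_lt hm),
      if_pos (Nat.succ_le_of_lt hm)] at H
    simp only [Pi.single_eq_same, Pi.single_eq_of_ne (show m + 1 ≠ n + 1 by omega),
      Pi.single_eq_of_ne (show n + 1 ≠ m + 1 by omega), mul_one, mul_zero, sub_zero] at H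
    exact mul_left_cancel₀ (Nat.cast_add_one_ne_zero m) H
  · intro h x y
    funext m
    rw [hatS_chiBracket_apply, fockBracket_hatS_apply]
    split_ifs with hm
    · rw [h m hm]
    · rfl

theorem stmt2_general (n : ℕ) (μ a b : ℝ) (hb : b ≠ 0)
    (c : ℕ → ℝ) :
    (∀ x y : ℕ → ℝ,
        hatS n a b c (chiBracket n μ x y) = fockBracket n (hatS n a b c x) (hatS n a b c y))
      ↔ (∀ k, 1 ≤ k → k ≤ n → c k = b ^ (-(k : ℤ)) * μ * a) := by
  rw [hatS_map_bracket_iff, forall_eq_mul_succ_iff hb]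
  refine ⟨fun h k hk hkn => ?_, fun h k hkn => ?_⟩
  · simpa [update_of_ne (show k ≠ 0 by omega), mul_assoc] using h k hkn
  · rcases Nat.eq_zero_or_pos k with rfl | hk
    · simp
    · simpa [update_of_ne hk.ne', mul_assoc] using h k hk hkn

/-- A linear map `ŝ_I : heis(1,n,ℝχ_I) → heis(F,1,n)` with
`ŝ_I(L_0) = a·i1`, `ŝ_I(L_{n+1}(χ_I)) = b·ip`, `ŝ_I(L_k(χ_I)) = c_k·iq^k`
(nonzero real constants `a, b, c_k`, so that `ŝ_I` is automatically a linear bijection)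
is a Lie algebra isomorphism, i.e. preserves brackets, if and only if
`c_k = b⁻ᵏ·|I|·a` for all `k ∈ {1,…,n}`. -/
theorem stmt2 (n : ℕ) (hn : 1 ≤ n) (μ a b : ℝ) (hμ : 0 < μ) (ha : a ≠ 0) (hb : b ≠ 0)
    (c : ℕ → ℝ) (hc : ∀ k, 1 ≤ k → k ≤ n → c k ≠ 0) :
    (∀ x y : ℕ → ℝ,
        hatS n a b c (chiBracket n μ x y) = fockBracket n (hatS n a b c x) (hatS n a b c y))
      ↔ (∀ k, 1 ≤ k → k ≤ n → c k = b ^ (-(k : ℤ)) * μ * a) :=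
  stmt2_general n μ a b hb c
end

section
/- For n = 2 the family of Fock states is not projective: with φ_F(W(k̂_I(u,P))) = (1-2iA)^{-1/2} e^{i a_0 |I|} exp( |I| · (4C²(A² + 2iA) − 3|M|²) / (6(1−2iA)) ) where A = a_2/√2, B = a_1/√2, C = u/√2, M = B + iC, there exist u, a_0, a_1, a_2 and a partition of I into m ≥ 2 parts such that ∏_j φ_F(W(k̂_{I_j}(u,P))) ≠ φ_F(W(k̂_I(u,P))); indeed the product equals (1−2iA)^{−m/2} times the same exponential factor, which differs from (1−2iA)^{−1/2} times that factor whenever a_2 ≠ 0 and m ≥ 2. -/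
open scoped BigOperators

/-- The exponent `i a₀ + (4C²(A² + 2iA) − 3|M|²)/(6(1 − 2iA))` of the `n = 2` Fock
characteristic function, with `A = a₂/√2`, `B = a₁/√2`, `C = u/√2`, `M = B + iC`. -/
noncomputable def fockExp2 (u a0 a1 a2 : ℝ) : ℂ :=
  (a0 : ℂ) * Complex.I +
    (4 * ((u / Real.sqrt 2 : ℝ) : ℂ) ^ 2 *
        (((a2 / Real.sqrt 2 : ℝ) : ℂ) ^ 2 + 2 * Complex.I * ((a2 / Real.sqrt 2 : ℝ) : ℂ)) -
      3 * (((a1 / Real.sqrt 2 : ℝ) ^ 2 + (u / Real.sqrt 2 : ℝ) ^ 2 : ℝ) : ℂ)) /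
      (6 * (1 - 2 * Complex.I * ((a2 / Real.sqrt 2 : ℝ) : ℂ)))

/-- The `n = 2` Fock expectation of the rescaled Weyl operator on a set of measure `c`:
`ψ_c(u, a₀ + a₁X + a₂X²) = (1 − 2iA)^{-1/2} · exp(c · (i a₀ + (4C²(A²+2iA) − 3|M|²)/(6(1−2iA))))`
(principal branch power). -/
noncomputable def fockChar2 (c u a0 a1 a2 : ℝ) : ℂ :=
  (1 - 2 * Complex.I * ((a2 / Real.sqrt 2 : ℝ) : ℂ)) ^ (-(1 : ℂ) / 2) *
    Complex.exp ((c : ℂ) * fockExp2 u a0 a1 a2)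

namespace Complex

lemma one_lt_norm_one_sub_two_I_mul {A : ℝ} (hA : A ≠ 0) : 1 < ‖1 - 2 * I * (A : ℂ)‖ := by
  have hsq : ‖1 - 2 * I * (A : ℂ)‖ ^ 2 = 1 + 4 * A ^ 2 := by
    rw [Complex.sq_norm, normSq_apply]
    simp only [sub_re, sub_im, mul_re, mul_im, I_re, I_im, ofReal_re, ofReal_im, one_re, one_im,
      re_ofNat, im_ofNat]
    ring
  nlinarith [norm_nonneg (1 - 2 * I * (A : ℂ)), sq_pos_of_ne_zero hA]

lemma cpow_ofReal_injective_of_one_lt_norm {z : ℂ} (hz : 1 < ‖z‖) :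
    Function.Injective fun x : ℝ => z ^ (x : ℂ) := by
  intro x y hxy
  have hnorm : ‖z‖ ^ x = ‖z‖ ^ y := by
    simpa only [norm_cpow_real] using congrArg norm hxy
  exact (Real.rpow_right_inj (by linarith) hz.ne').mp hnorm

end Complex

open Complex

lemma prod_fockChar2 {ι : Type*} [Fintype ι] (cs : ι → ℝ) (u a0 a1 a2 : ℝ) :
    ∏ j, fockChar2 (cs j) u a0 a1 a2
      = (1 - 2 * I * ((a2 / Real.sqrt 2 : ℝ) : ℂ)) ^ (-(Fintype.card ι : ℂ) / 2) *
          exp (((∑ j, cs j : ℝ) : ℂ) * fockExp2 u a0 a1 a2) := by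
  have hpow (z : ℂ) : (z ^ (-(1 : ℂ) / 2)) ^ Fintype.card ι = z ^ (-(Fintype.card ι : ℂ) / 2) := by
    rw [← cpow_nat_mul]
    ring_nf
  simp only [fockChar2, Finset.prod_mul_distrib, Finset.prod_const, Finset.card_univ, hpow,
    ← exp_sum, ← Finset.sum_mul, ofReal_sum]

theorem stmt11_general (c : ℝ) (m : ℕ) (hm : 2 ≤ m) (cs : Fin m → ℝ)
    (hsum : (∑ j, cs j) = c) (u a0 a1 a2 : ℝ) (ha2 : a2 ≠ 0) :
    (∏ j, fockChar2 (cs j) u a0 a1 a2)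
        = (1 - 2 * Complex.I * ((a2 / Real.sqrt 2 : ℝ) : ℂ)) ^ (-(m : ℂ) / 2) *
            Complex.exp ((c : ℂ) * fockExp2 u a0 a1 a2) ∧
      (∏ j, fockChar2 (cs j) u a0 a1 a2) ≠ fockChar2 c u a0 a1 a2 := by
  have hprod := prod_fockChar2 cs u a0 a1 a2
  rw [Fintype.card_fin, hsum] at hprod
  refine ⟨hprod, fun h => ?_⟩
  have hA : a2 / Real.sqrt 2 ≠ 0 := div_ne_zero ha2 (by positivity)
  -- After cancelling `exp (c E)`: `(1 - 2iA)^(-m/2) = (1 - 2iA)^(-1/2)`, impossible as `‖1 - 2iA‖ > 1`.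
  have hpow := mul_right_cancel₀ (exp_ne_zero _) (hprod.symm.trans h)
  rw [show -(m : ℂ) / 2 = ((-(m : ℝ) / 2 : ℝ) : ℂ) by push_cast; rfl,
    show -(1 : ℂ) / 2 = ((-1 / 2 : ℝ) : ℂ) by push_cast; rfl] at hpow
  have hexp := cpow_ofReal_injective_of_one_lt_norm (one_lt_norm_one_sub_two_I_mul hA) hpow
  have : (2 : ℝ) ≤ m := by exact_mod_cast hm
  linarith

/-- For `n = 2` the family of Fock states is not projective: for any
partition of `I` into `m ≥ 2` parts of positive measures `|I_j|` summing to `|I| = c`,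
the product `∏_j φ_F(W(k̂_{I_j}(u,P)))` equals `(1 − 2iA)^{-m/2}` times the exponential
factor `exp(c·(i a₀ + …))`, which differs from `φ_F(W(k̂_I(u,P)))` whenever `a₂ ≠ 0`. -/
theorem stmt11 (c : ℝ) (hc : 0 < c) (m : ℕ) (hm : 2 ≤ m) (cs : Fin m → ℝ)
    (hcs : ∀ j, 0 < cs j) (hsum : (∑ j, cs j) = c) (u a0 a1 a2 : ℝ) (ha2 : a2 ≠ 0) :
    (∏ j, fockChar2 (cs j) u a0 a1 a2)
        = (1 - 2 * Complex.I * ((a2 / Real.sqrt 2 : ℝ) : ℂ)) ^ (-(m : ℂ) / 2) *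
            Complex.exp ((c : ℂ) * fockExp2 u a0 a1 a2) ∧
      (∏ j, fockChar2 (cs j) u a0 a1 a2) ≠ fockChar2 c u a0 a1 a2 :=
  stmt11_general c m hm cs hsum u a0 a1 a2 ha2
end
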